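/- arXiv:1309.6610 — 2 statements merged into one kernel-verified Lean document; each statement's English description precedes it below -/
import Mathlib

section
/- There exist a constant c > 0 and thresholds n₀ and w₀ such that for every conflict-free deterministic distributed broadcast algorithm on a multiple-access channel with n ≥ n₀ nodes and every window size w ≥ w₀, there is a window adversary with individual injection rates of window w and aggregate injection rate strictly less than 1, and an execution of the algorithm against this adversary in which some packet is delayed by at least c · n · w rounds. -/
/-!
Let the adversary inject `w - 2` packets into a node `z` at the start of every window, and
suppose every packet is heard within `D < n w / 4` rounds. A single extra packet injected into
another node `v` in round `τ` is then heard before round `τ + D`, so `v` *claims* a round of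
`[τ, τ + D)`: changing only the injections into `v`, and not the earlier feedback, makes `v`
transmit in it. By conflict-freeness no round is claimed by two nodes, and no claimed round
serves `z`. Hence every block of `D` rounds holds `n - 1` claimed rounds besides those serving
`z`, and over `D` blocks this leaves `z` less than the fraction `1 - 2 / w` of the channel that
its packets need.
-/

/-- Feedback that a node may receive from the channel in a round. -/
inductive Feedback (n : ℕ) (M : Type) where
  | heard : Fin n → M → Feedback n M
  | silence : Feedback n M
  | collision : Feedback n M

/-- A deterministic distributed broadcast algorithm for a multiple-access channel
with `n` nodes.  Each node has a set of states with a designated initial state;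
from its state and the information whether its FIFO queue is nonempty it decides
whether to transmit, and which message content to transmit; its deterministic
state transition depends on its previous state, whether its queue was nonempty,
the feedback from the channel, and the number of packets injected into it in the
round. -/
structure Algo (n : ℕ) where
  State : Type
  Msg : Type
  init : Fin n → State
  send : Fin n → State → Bool → Bool
  msg : Fin n → State → Msg
  next : Fin n → State → Bool → Feedback n Msg → ℕ → State

/-- An execution of an algorithm against the injection pattern `a`
(`a t i` is the number of packets injected into node `i` in round `t`);
`cd` records whether the channel is with collision detection. -/
structure Exec {n : ℕ} (A : Algo n) (cd : Bool) (a : ℕ → Fin n → ℕ) where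
  state : ℕ → Fin n → A.State
  queue : ℕ → Fin n → ℕ

namespace Exec

variable {n : ℕ} {A : Algo n} {cd : Bool} {a : ℕ → Fin n → ℕ}

/-- Node `i` transmits in round `t`. -/
def transmits (E : Exec A cd a) (t : ℕ) (i : Fin n) : Bool :=
  A.send i (E.state t i) (decide (0 < E.queue t i))

/-- The set of nodes transmitting in round `t`. -/
def transmitters (E : Exec A cd a) (t : ℕ) : Finset (Fin n) :=
  Finset.univ.filter fun i => E.transmits t i = true

/-- The feedback delivered by the channel in round `t`: if exactly one node
transmits then its message is heard by every node; with no transmitters the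
round is silent; with at least two transmitters a collision occurs, which is
perceived as silence when the channel is without collision detection. -/
noncomputable def feedback (E : Exec A cd a) (t : ℕ) : Feedback n A.Msg :=
  if h : ∃ i, E.transmitters t = {i} then
    Feedback.heard h.choose (A.msg h.choose (E.state t h.choose))
  else if E.transmitters t = ∅ then Feedback.silence
  else if cd then Feedback.collision else Feedback.silence

/-- A packet (from node `i`) is heard in round `t`: node `i` is the unique
transmitter in round `t` and it has a packet (the head of its FIFO queue). -/
def PacketHeard (E : Exec A cd a) (t : ℕ) (i : Fin n) : Prop :=
  E.transmitters t = {i} ∧ 0 < E.queue t i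

instance (E : Exec A cd a) (t : ℕ) (i : Fin n) : Decidable (E.PacketHeard t i) := by
  unfold PacketHeard; infer_instance

/-- The execution obeys the dynamics: initial states and empty initial queues;
states evolve by the algorithm's transition function; a queue grows by the
injected packets and loses a packet exactly when this packet is heard. -/
def Valid (E : Exec A cd a) : Prop :=
  (∀ i, E.state 0 i = A.init i) ∧
  (∀ i, E.queue 0 i = 0) ∧
  (∀ t i, E.state (t + 1) i =
      A.next i (E.state t i) (decide (0 < E.queue t i)) (E.feedback t) (a t i)) ∧
  (∀ t i, E.queue (t + 1) i =
      E.queue t i + a t i - (if E.PacketHeard t i then 1 else 0))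

/-- The number of packets of node `i` heard in rounds `0, …, t-1`. -/
def heardCum (E : Exec A cd a) (i : Fin n) (t : ℕ) : ℕ :=
  ((Finset.range t).filter fun u => E.PacketHeard u i).card

/-- The total number of packets stored in queues at round `t`. -/
def totalQueue (E : Exec A cd a) (t : ℕ) : ℕ := ∑ i, E.queue t i

end Exec

/-- The number of packets injected into node `i` in rounds `0, …, t-1`. -/
def injCum {n : ℕ} (a : ℕ → Fin n → ℕ) (i : Fin n) (t : ℕ) : ℕ :=
  ∑ u ∈ Finset.range t, a u i

/-- `a` is an injection pattern allowed for a window adversary with individual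
injection rates, of window size `w` and shares `s`: in every interval of `w`
consecutive rounds, at most `s i` packets are injected into node `i`. -/
def Conforms {n : ℕ} (a : ℕ → Fin n → ℕ) (w : ℕ) (s : Fin n → ℕ) : Prop :=
  ∀ (i : Fin n) (t : ℕ), ∑ u ∈ Finset.Ico t (t + w), a u i ≤ s i

/-- A non-adaptive algorithm: a transmitted message consists of a packet only,
with no control bits (so the content of a message carries no information), and
a node cannot transmit a message when it has no packet. -/
def Algo.NonAdaptive {n : ℕ} (A : Algo n) : Prop :=
  (∀ i s s', A.msg i s = A.msg i s') ∧ (∀ i s, A.send i s false = false)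

/-- An acknowledgment-based algorithm: a node without packets to transmit stays
in its initial state, and a node resets its state to the initial state
immediately after a successful transmission. -/
def Algo.AckBased {n : ℕ} (A : Algo n) : Prop :=
  (∀ i s fb, A.next i s false fb 0 = A.init i) ∧
  (∀ i s q fb k, (∃ m, fb = Feedback.heard i m) → A.next i s q fb k = A.init i)

/-- A conflict-free algorithm: in any execution, at most one node transmits in
each round. -/
def Algo.ConflictFree {n : ℕ} (A : Algo n) : Prop :=
  ∀ (cd : Bool) (a : ℕ → Fin n → ℕ) (E : Exec A cd a), E.Valid →
    ∀ t, (E.transmitters t).card ≤ 1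

/-- Every packet is heard within `L` rounds of its injection: for each node `i`,
all packets injected into `i` in rounds `0, …, r` are heard by round `r + L`
(FIFO counting formulation). -/
def Exec.LatencyBound {n : ℕ} {A : Algo n} {cd : Bool} {a : ℕ → Fin n → ℕ}
    (E : Exec A cd a) (L : ℕ) : Prop :=
  ∀ (i : Fin n) (r : ℕ), injCum a i (r + 1) ≤ E.heardCum i (r + L + 1)

/-- Some packet is delayed by at least `D` rounds: for some node `i` and round
`r`, fewer packets of node `i` are heard in rounds `0, …, r + D - 1` than were
injected into `i` in rounds `0, …, r`, so some packet injected by round `r`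
spends at least `D` rounds in the queue. -/
def Exec.DelayAtLeast {n : ℕ} {A : Algo n} {cd : Bool} {a : ℕ → Fin n → ℕ}
    (E : Exec A cd a) (D : ℕ) : Prop :=
  ∃ (i : Fin n) (r : ℕ), E.heardCum i (r + D) < injCum a i (r + 1)

/-- The number of packets stored in queues grows without bound. -/
def Exec.UnboundedQueues {n : ℕ} {A : Algo n} {cd : Bool} {a : ℕ → Fin n → ℕ}
    (E : Exec A cd a) : Prop :=
  ∀ B : ℕ, ∃ t, B < E.totalQueue t

namespace Exec

variable {n : ℕ} {A : Algo n} {cd : Bool} {a a' : ℕ → Fin n → ℕ}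

def signal (E : Exec A cd a) (t : ℕ) (i : Fin n) : Option A.Msg :=
  if E.transmits t i then some (A.msg i (E.state t i)) else none

theorem mem_transmitters {E : Exec A cd a} {t : ℕ} {i : Fin n} :
    i ∈ E.transmitters t ↔ E.transmits t i = true := by
  simp [transmitters]

theorem feedback_of_transmitters_eq_singleton {E : Exec A cd a} {t : ℕ} {j : Fin n}
    (h : E.transmitters t = {j}) : E.feedback t = .heard j (A.msg j (E.state t j)) := by
  have hex : ∃ i, E.transmitters t = {i} := ⟨j, h⟩
  have hchoose : hex.choose = j := Finset.singleton_injective (hex.choose_spec.symm.trans h)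
  rw [feedback, dif_pos hex, hchoose]

theorem feedback_eq_heard_iff {E : Exec A cd a} {t : ℕ} {j : Fin n} {m : A.Msg} :
    E.feedback t = .heard j m ↔ E.transmitters t = {j} ∧ A.msg j (E.state t j) = m := by
  refine ⟨fun h => ?_, fun ⟨hT, hm⟩ => hm ▸ feedback_of_transmitters_eq_singleton hT⟩
  by_cases hex : ∃ i, E.transmitters t = {i}
  · obtain ⟨i, hi⟩ := hex
    rw [feedback_of_transmitters_eq_singleton hi, Feedback.heard.injEq] at h
    obtain ⟨rfl, hm⟩ := h
    exact ⟨hi, hm⟩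
  · rw [feedback, dif_neg hex] at h
    split_ifs at h

theorem transmitters_eq_singleton_iff {E : Exec A cd a} {t : ℕ} {j : Fin n} :
    E.transmitters t = {j} ↔ ∃ m, E.feedback t = .heard j m := by
  simp [feedback_eq_heard_iff]

theorem transmits_eq_of_signal_eq {E : Exec A cd a} {E' : Exec A cd a'} {t : ℕ} {i : Fin n}
    (h : E.signal t i = E'.signal t i) : E.transmits t i = E'.transmits t i := by
  unfold signal at h
  split_ifs at h with h₁ h₂ h₂ <;> simp_all

theorem mem_transmitters_congr {E : Exec A cd a} {E' : Exec A cd a'} {t : ℕ} {i : Fin n}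
    (h : E.signal t i = E'.signal t i) : i ∈ E.transmitters t ↔ i ∈ E'.transmitters t := by
  rw [mem_transmitters, mem_transmitters, transmits_eq_of_signal_eq h]

theorem feedback_eq_of_signal_eq {E : Exec A cd a} {E' : Exec A cd a'} {t : ℕ}
    (h : E.signal t = E'.signal t) : E.feedback t = E'.feedback t := by
  have hT : E.transmitters t = E'.transmitters t :=
    Finset.ext fun i => mem_transmitters_congr (congrFun h i)
  by_cases hex : ∃ j, E.transmitters t = {j}
  · obtain ⟨j, hj⟩ := hex
    have hsig := congrFun h j
    have hj' : j ∈ E.transmitters t := hj ▸ Finset.mem_singleton_self j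
    simp only [signal, mem_transmitters.1 hj', mem_transmitters.1 (hT ▸ hj'),
      if_true, Option.some.injEq] at hsig
    rw [feedback_of_transmitters_eq_singleton hj, feedback_of_transmitters_eq_singleton (hT ▸ hj),
      hsig]
  · have hex' : ¬ ∃ j, E'.transmitters t = {j} := hT ▸ hex
    simp only [feedback, dif_neg hex', hT]

theorem signal_eq_none {E : Exec A cd a} {t : ℕ} {i : Fin n} (h : i ∉ E.transmitters t) :
    E.signal t i = none := by
  simp_all [signal, mem_transmitters]

theorem signal_eq_some_iff {E : Exec A cd a} {t : ℕ} {j : Fin n} {m : A.Msg}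
    (hE : (E.transmitters t).card ≤ 1) :
    E.signal t j = some m ↔ E.feedback t = .heard j m := by
  rw [feedback_eq_heard_iff, signal]
  split_ifs with htr
  · have hj : j ∈ E.transmitters t := mem_transmitters.2 htr
    have hT : E.transmitters t = {j} :=
      Finset.eq_singleton_iff_unique_mem.2 ⟨hj, fun k hk => Finset.card_le_one.1 hE k hk j hj⟩
    simp [hT]
  · simp only [false_iff, not_and]
    intro hT
    exact absurd (mem_transmitters.1 (hT ▸ Finset.mem_singleton_self j)) (by simp [htr])

theorem signal_eq_of_feedback_eq {E : Exec A cd a} {E' : Exec A cd a'} {t : ℕ}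
    (hE : (E.transmitters t).card ≤ 1) (hE' : (E'.transmitters t).card ≤ 1)
    (h : E.feedback t = E'.feedback t) : E.signal t = E'.signal t :=
  funext fun _ => Option.ext fun _ => by rw [signal_eq_some_iff hE, signal_eq_some_iff hE', h]

theorem packetHeard_iff {E : Exec A cd a} {t : ℕ} {j : Fin n} :
    E.PacketHeard t j ↔ (∃ m, E.feedback t = .heard j m) ∧ 0 < E.queue t j := by
  rw [PacketHeard, transmitters_eq_singleton_iff]

theorem Valid.state_eq_and_queue_eq {E : Exec A cd a} {E' : Exec A cd a'} (hE : E.Valid)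
    (hE' : E'.Valid) {j : Fin n} {t : ℕ} (ha : ∀ u < t, a u j = a' u j)
    (hfb : ∀ u < t, E.feedback u = E'.feedback u) :
    E.state t j = E'.state t j ∧ E.queue t j = E'.queue t j := by
  induction t with
  | zero => exact ⟨(hE.1 j).trans (hE'.1 j).symm, (hE.2.1 j).trans (hE'.2.1 j).symm⟩
  | succ t ih =>
    obtain ⟨hs, hq⟩ := ih (fun u hu => ha u (by omega)) (fun u hu => hfb u (by omega))
    have hheard : E.PacketHeard t j ↔ E'.PacketHeard t j := by
      rw [packetHeard_iff, packetHeard_iff, hfb t (by omega), hq]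
    rw [hE.2.2.1, hE'.2.2.1, hE.2.2.2, hE'.2.2.2, hs, hq, hfb t (by omega), ha t (by omega),
      if_congr hheard rfl rfl]
    exact ⟨rfl, rfl⟩

theorem Valid.signal_eq {E : Exec A cd a} {E' : Exec A cd a'} (hE : E.Valid)
    (hE' : E'.Valid) {j : Fin n} {t : ℕ} (ha : ∀ u < t, a u j = a' u j)
    (hfb : ∀ u < t, E.feedback u = E'.feedback u) : E.signal t j = E'.signal t j := by
  obtain ⟨hs, hq⟩ := hE.state_eq_and_queue_eq hE' ha hfb
  simp only [signal, transmits, hs, hq]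
  rfl

theorem Valid.queue_eq_zero {E : Exec A cd a} (hE : E.Valid) {i : Fin n} {t : ℕ}
    (ha : ∀ u < t, a u i = 0) : E.queue t i = 0 := by
  induction t with
  | zero => exact hE.2.1 i
  | succ t ih => rw [hE.2.2.2, ih fun u hu => ha u (by omega), ha t (by omega)]; simp

open Finset in
theorem heardCum_add (E : Exec A cd a) (i : Fin n) (t s : ℕ) :
    E.heardCum i (t + s) = E.heardCum i t + #{u ∈ Ico t (t + s) | E.PacketHeard u i} := by
  rw [Exec.heardCum, Exec.heardCum, range_eq_Ico, range_eq_Ico,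
    ← Ico_union_Ico_eq_Ico (Nat.zero_le t) (Nat.le_add_right t s), filter_union,
    card_union_of_disjoint (disjoint_filter_filter (Ico_disjoint_Ico_consecutive 0 t (t + s)))]

end Exec

namespace Algo

variable {n : ℕ} (A : Algo n) (cd : Bool) (a : ℕ → Fin n → ℕ)

/-- `E` freezes the current configuration, so that the feedback and the heard packets of
round `t` can be read off with `Exec.feedback` and `Exec.PacketHeard`. -/
noncomputable def run : ℕ → (Fin n → A.State) × (Fin n → ℕ)
  | 0 => (A.init, 0)
  | t + 1 =>
    let E : Exec A cd a := ⟨fun _ => (run t).1, fun _ => (run t).2⟩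
    (fun i => A.next i ((run t).1 i) (decide (0 < (run t).2 i)) (E.feedback t) (a t i),
     fun i => (run t).2 i + a t i - if E.PacketHeard t i then 1 else 0)

noncomputable def exec : Exec A cd a := ⟨fun t => (A.run cd a t).1, fun t => (A.run cd a t).2⟩

theorem exec_valid : (A.exec cd a).Valid :=
  ⟨fun _ => rfl, fun _ => rfl, fun _ _ => rfl, fun _ _ => rfl⟩

end Algo

section Patterns

open Finset

variable {n : ℕ}

def periodicBurst (w : ℕ) (s : Fin n → ℕ) : ℕ → Fin n → ℕ :=
  fun t => if w ∣ t then s else 0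

def addPacket (a : ℕ → Fin n → ℕ) (v : Fin n) (τ : ℕ) : ℕ → Fin n → ℕ :=
  fun t i => a t i + if i = v ∧ t = τ then 1 else 0

theorem card_filter_dvd_Ico_le_one {w : ℕ} (t : ℕ) :
    #{u ∈ Ico t (t + w) | w ∣ u} ≤ 1 := by
  refine card_le_one.2 fun u hu u' hu' => ?_
  simp only [mem_filter, mem_Ico] at hu hu'
  have h₁ := Nat.eq_zero_of_dvd_of_lt (Nat.dvd_sub hu'.2 hu.2) (by omega)
  have h₂ := Nat.eq_zero_of_dvd_of_lt (Nat.dvd_sub hu.2 hu'.2) (by omega)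
  omega

theorem le_mul_card_filter_dvd_range {w : ℕ} (hw : 0 < w) (t : ℕ) :
    t ≤ w * #{u ∈ range t | w ∣ u} := by
  have hinj : (t + w - 1) / w ≤ #{u ∈ range t | w ∣ u} := by
    refine (card_range _).symm.le.trans (card_le_card_of_injOn (· * w) ?_ ?_)
    · intro j hj
      have hj : (j + 1) * w ≤ t + w - 1 := (Nat.le_div_iff_mul_le hw).1 (mem_range.1 hj)
      simp only [coe_filter, mem_range]
      exact ⟨by rw [Nat.succ_mul] at hj; omega, Dvd.intro_left j rfl⟩
    · exact fun j _ j' _ h => Nat.eq_of_mul_eq_mul_right hw h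
  have := Nat.div_add_mod (t + w - 1) w
  have := Nat.mod_lt (t + w - 1) hw
  have := Nat.mul_le_mul_left w hinj
  omega

theorem conforms_periodicBurst {w : ℕ} (s : Fin n → ℕ) : Conforms (periodicBurst w s) w s := by
  intro i t
  simp only [periodicBurst, ite_apply, Pi.zero_apply]
  rw [← sum_filter, sum_const, smul_eq_mul]
  exact (Nat.mul_le_mul_right _ (card_filter_dvd_Ico_le_one t)).trans (one_mul _).le

theorem mul_le_mul_injCum_periodicBurst {w : ℕ} (hw : 0 < w) (s : Fin n → ℕ) (i : Fin n)
    (t : ℕ) : s i * t ≤ w * injCum (periodicBurst w s) i t := by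
  simp only [injCum, periodicBurst, ite_apply, Pi.zero_apply]
  rw [← sum_filter, sum_const, smul_eq_mul, mul_comm _ (s i), ← mul_assoc,
    mul_comm w, mul_assoc]
  exact Nat.mul_le_mul_left _ (le_mul_card_filter_dvd_range hw t)

theorem addPacket_of_ne {a : ℕ → Fin n → ℕ} {v i : Fin n} {τ : ℕ} (t : ℕ) (h : i ≠ v) :
    addPacket a v τ t i = a t i := by
  simp [addPacket, h]

theorem addPacket_of_ne_round {a : ℕ → Fin n → ℕ} {v : Fin n} {τ t : ℕ} (i : Fin n)
    (h : t ≠ τ) : addPacket a v τ t i = a t i := by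
  simp [addPacket, h]

theorem one_le_injCum_addPacket (a : ℕ → Fin n → ℕ) (v : Fin n) (τ : ℕ) :
    1 ≤ injCum (addPacket a v τ) v (τ + 1) := by
  rw [injCum, sum_range_succ]
  simp only [addPacket, and_self, if_true]
  omega

theorem Conforms.addPacket {a : ℕ → Fin n → ℕ} {w : ℕ} {s : Fin n → ℕ} (h : Conforms a w s)
    (v : Fin n) (τ : ℕ) : Conforms (addPacket a v τ) w (s + Pi.single v 1) := by
  intro i t
  simp only [_root_.addPacket, sum_add_distrib, Pi.add_apply]
  refine Nat.add_le_add (h i t) ?_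
  by_cases hi : i = v
  · subst hi
    simp only [true_and, Pi.single_eq_same]
    rw [sum_ite_eq']
    split_ifs <;> omega
  · simp [hi]

end Patterns

namespace Algo

open Finset

variable {n : ℕ} {A : Algo n} {cd : Bool} {a : ℕ → Fin n → ℕ}

theorem ConflictFree.card_transmitters_le_one (hCF : A.ConflictFree) (cd : Bool)
    (a : ℕ → Fin n → ℕ) (t : ℕ) : #((A.exec cd a).transmitters t) ≤ 1 :=
  hCF cd a _ (A.exec_valid cd a) t

variable (A cd a) in
def Claims (v : Fin n) (d : ℕ) : Prop :=
  ∃ a' : ℕ → Fin n → ℕ, (∀ u j, j ≠ v → a' u j = a u j) ∧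
    (∀ u < d, (A.exec cd a').feedback u = (A.exec cd a).feedback u) ∧
    v ∈ (A.exec cd a').transmitters d

theorem Claims.of_mem_transmitters {v : Fin n} {d : ℕ} (h : v ∈ (A.exec cd a).transmitters d) :
    A.Claims cd a v d :=
  ⟨a, fun _ _ _ => rfl, fun _ _ => rfl, h⟩

theorem Claims.eq_of_mem_transmitters (hCF : A.ConflictFree) {v z : Fin n} {d : ℕ}
    (h : A.Claims cd a v d) (hz : z ∈ (A.exec cd a).transmitters d) : z = v := by
  obtain ⟨a', ha', hfb, hv⟩ := h
  by_contra hzv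
  have hsig := (A.exec_valid cd a').signal_eq (A.exec_valid cd a) (fun u _ => ha' u z hzv) hfb
  exact hzv (card_le_one.1 (hCF.card_transmitters_le_one cd a' d) z
    ((Exec.mem_transmitters_congr hsig).2 hz) v hv)

/-- Two nodes claiming the same round would both transmit in it if their alterations were
combined, since neither alteration changes the feedback before that round. -/
theorem Claims.unique (hCF : A.ConflictFree) {v v' : Fin n} {d : ℕ}
    (h : A.Claims cd a v d) (h' : A.Claims cd a v' d) : v = v' := by
  obtain ⟨a₁, ha₁, hfb₁, hv₁⟩ := h
  obtain ⟨a₂, ha₂, hfb₂, hv₂⟩ := h'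
  by_contra hne
  set b : ℕ → Fin n → ℕ := fun u j => if j = v then a₁ u j else a₂ u j
  have hb₁ : ∀ u j, j ≠ v' → b u j = a₁ u j := by
    intro u j hj
    by_cases hjv : j = v
    · simp [b, hjv]
    · simp [b, hjv, ha₁ u j hjv, ha₂ u j hj]
  have hb₂ : ∀ u j, j ≠ v → b u j = a₂ u j := fun u j hj => by simp [b, hj]
  have hvalid := A.exec_valid cd b
  have hcard := hCF.card_transmitters_le_one cd
  have hfb : ∀ u < d, (A.exec cd b).feedback u = (A.exec cd a).feedback u := by
    intro u
    induction u using Nat.strong_induction_on with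
    | _ u ih =>
      intro hu
      refine Exec.feedback_eq_of_signal_eq (funext fun j => ?_)
      by_cases hj : j = v'
      · subst hj
        rw [hvalid.signal_eq (A.exec_valid cd a₂) (fun t _ => hb₂ t j (Ne.symm hne))
            fun t ht => (ih t ht (by omega)).trans (hfb₂ t (by omega)).symm,
          Exec.signal_eq_of_feedback_eq (hcard a₂ u) (hcard a u) (hfb₂ u hu)]
      · rw [hvalid.signal_eq (A.exec_valid cd a₁) (fun t _ => hb₁ t j hj)
            fun t ht => (ih t ht (by omega)).trans (hfb₁ t (by omega)).symm,
          Exec.signal_eq_of_feedback_eq (hcard a₁ u) (hcard a u) (hfb₁ u hu)]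
  have hmem : ∀ {a' : ℕ → Fin n → ℕ} {x : Fin n}, (∀ u, b u x = a' u x) →
      (∀ u < d, (A.exec cd a').feedback u = (A.exec cd a).feedback u) →
      x ∈ (A.exec cd a').transmitters d → x ∈ (A.exec cd b).transmitters d := by
    intro a' x hx hfb'
    exact (Exec.mem_transmitters_congr (hvalid.signal_eq (A.exec_valid cd a') (fun u _ => hx u)
      fun u hu => (hfb u hu).trans (hfb' u hu).symm)).2
  exact hne (card_le_one.1 (hcard b d) v (hmem (fun u => hb₁ u v hne) hfb₁ hv₁)
    v' (hmem (fun u => hb₂ u v' (Ne.symm hne)) hfb₂ hv₂))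

/-- The claimed round is the first one whose feedback the extra packet changes, or the one in
which it is heard if that comes first. -/
theorem Claims.exists_of_heardCum_addPacket {v : Fin n} {τ D : ℕ}
    (hv : ∀ u < τ, a u v = 0)
    (h : 1 ≤ (A.exec cd (addPacket a v τ)).heardCum v (τ + D)) :
    ∃ d ∈ Ico τ (τ + D), A.Claims cd a v d := by
  classical
  set E := A.exec cd a
  set E' := A.exec cd (addPacket a v τ)
  obtain ⟨u₀, hu₀⟩ : ∃ u₀, u₀ ∈ range (τ + D) ∧ E'.PacketHeard u₀ v := by
    simpa [Exec.heardCum, Finset.Nonempty] using card_pos.1 h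
  have hex : ∃ d, E'.feedback d ≠ E.feedback d ∨ E'.PacketHeard d v := ⟨u₀, .inr hu₀.2⟩
  set d := Nat.find hex
  have hbefore : ∀ u < d, E'.feedback u = E.feedback u := fun u hu =>
    not_not.1 (not_or.1 (Nat.find_min hex hu)).1
  have hsignal : ∀ j, (∀ u < d, addPacket a v τ u j = a u j) → E'.signal d j = E.signal d j :=
    fun j hj => (A.exec_valid cd _).signal_eq (A.exec_valid cd a) hj hbefore
  have hτd : τ ≤ d := by
    by_contra! hdτ
    rcases Nat.find_spec hex with hne | hheard
    · exact hne (Exec.feedback_eq_of_signal_eq (funext fun j =>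
        hsignal j fun u hu => addPacket_of_ne_round j (by omega)))
    · refine hheard.2.ne' ((A.exec_valid cd _).queue_eq_zero fun u hu => ?_)
      rw [addPacket_of_ne_round v (by omega)]
      exact hv u (by omega)
  refine ⟨d, mem_Ico.2 ⟨hτd, (Nat.find_min' hex (.inr hu₀.2)).trans_lt (mem_range.1 hu₀.1)⟩, ?_⟩
  have hclaim : v ∈ E'.transmitters d → A.Claims cd a v d :=
    fun hv' => ⟨_, fun u j hj => addPacket_of_ne u hj, hbefore, hv'⟩
  rcases Nat.find_spec hex with hne | hheard
  · by_contra hnot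
    have hvE : v ∉ E.transmitters d := fun hv' => hnot (.of_mem_transmitters hv')
    have hvE' : v ∉ E'.transmitters d := fun hv' => hnot (hclaim hv')
    refine hne (Exec.feedback_eq_of_signal_eq (funext fun j => ?_))
    by_cases hj : j = v
    · rw [hj, Exec.signal_eq_none hvE, Exec.signal_eq_none hvE']
    · exact hsignal j fun u _ => addPacket_of_ne u hj
  · exact hclaim (hheard.1 ▸ mem_singleton_self v)

/-- Within a block of `D` rounds, the rounds claimed by the nodes other than `z` are distinct
and differ from the rounds in which a packet of `z` is heard. -/
theorem card_heard_add_le_of_claims (hCF : A.ConflictFree) (z : Fin n) (τ D : ℕ)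
    (h : ∀ v ≠ z, ∃ d ∈ Ico τ (τ + D), A.Claims cd a v d) :
    (n - 1) + #{u ∈ Ico τ (τ + D) | (A.exec cd a).PacketHeard u z} ≤ D := by
  classical
  choose! f hfI hfC using h
  set S := (univ.erase z).image f
  set H := {u ∈ Ico τ (τ + D) | (A.exec cd a).PacketHeard u z}
  have hS : #S = n - 1 := by
    rw [card_image_of_injOn, card_erase_of_mem (mem_univ z), card_univ, Fintype.card_fin]
    intro v hv v' hv' hvv'
    exact (hfC v (mem_erase.1 hv).1).unique hCF (hvv' ▸ hfC v' (mem_erase.1 hv').1)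
  have hdisj : Disjoint S H := by
    refine disjoint_left.2 fun d hd hH => ?_
    obtain ⟨v, hv, rfl⟩ := mem_image.1 hd
    have hz := (mem_filter.1 hH).2.1 ▸ mem_singleton_self z
    exact (mem_erase.1 hv).1 ((hfC v (mem_erase.1 hv).1).eq_of_mem_transmitters hCF hz).symm
  have hSH : S ∪ H ⊆ Ico τ (τ + D) :=
    union_subset (image_subset_iff.2 fun v hv => hfI v (mem_erase.1 hv).1) (filter_subset _ _)
  calc n - 1 + #H = #(S ∪ H) := by rw [card_union_of_disjoint hdisj, hS]
    _ ≤ #(Ico τ (τ + D)) := card_le_card hSH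
    _ = D := by simp

theorem mul_add_heardCum_le_of_claims (hCF : A.ConflictFree) (z : Fin n) (D K : ℕ)
    (h : ∀ k < K, ∀ v ≠ z, ∃ d ∈ Ico (k * D) (k * D + D), A.Claims cd a v d) :
    (n - 1) * K + (A.exec cd a).heardCum z (K * D) ≤ K * D := by
  induction K with
  | zero => simp [Exec.heardCum]
  | succ K ih =>
    have hblock := card_heard_add_le_of_claims hCF z (K * D) D (h K (by omega))
    have hprev := ih fun k hk => h k (by omega)
    rw [Nat.succ_mul, Exec.heardCum_add, Nat.mul_succ]
    omega

end Algo

theorem mul_lt_four_mul_of_round_budget {n w m H : ℕ} (hn : 5 ≤ n) (hw : 2 ≤ w)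
    (hcount : (n - 1) * (m + 1) + H ≤ (m + 1) * (m + 1))
    (hH : (w - 2) * (m * (m + 1) + 1) ≤ w * H) : n * w < 4 * m := by
  by_contra! hm
  obtain ⟨n, rfl⟩ : ∃ k, n = k + 5 := ⟨n - 5, by omega⟩
  obtain ⟨w, rfl⟩ : ∃ k, w = k + 2 := ⟨w - 2, by omega⟩
  rw [show n + 5 - 1 = n + 4 by omega] at hcount
  rw [Nat.add_sub_cancel] at hH
  have h₁ : (w + 2) * ((n + 4) * (m + 1)) + w * (m * (m + 1)) ≤
      (w + 2) * ((m + 1) * (m + 1)) := by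
    have := Nat.mul_le_mul_left (w + 2) hcount
    nlinarith
  have h₂ : (w + 2) * (n + 4) + w * m ≤ (w + 2) * (m + 1) :=
    Nat.le_of_mul_le_mul_right (c := m + 1) (by nlinarith) (by omega)
  nlinarith

open Algo Finset in
/-- There are a constant `c > 0` and thresholds `n₀`, `w₀` such
that every conflict-free algorithm on `n ≥ n₀` nodes admits, for every window
size `w ≥ w₀`, a window adversary of window `w` with aggregate injection rate
strictly less than `1` (the sum of the shares is less than `w`) and an
execution in which some packet is delayed by at least `c · n · w` rounds. -/
theorem stmt4 :
    ∃ c : ℝ, 0 < c ∧ ∃ n₀ w₀ : ℕ,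
      ∀ (n : ℕ), n₀ ≤ n → ∀ (A : Algo n), A.ConflictFree →
        ∀ (w : ℕ), w₀ ≤ w →
          ∃ (s : Fin n → ℕ) (a : ℕ → Fin n → ℕ),
            (∑ i, s i) < w ∧ Conforms a w s ∧
            ∃ E : Exec A false a, E.Valid ∧
              ∃ D : ℕ, c * n * w ≤ (D : ℝ) ∧ E.DelayAtLeast D := by
  refine ⟨1 / 4, by norm_num, 5, 2, fun n hn A hCF w hw => ?_⟩
  by_contra! hno
  set m := n * w / 4
  have hD : 1 / 4 * n * w ≤ ((m + 1 : ℕ) : ℝ) := by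
    have : n * w < 4 * (m + 1) := by omega
    have : ((n * w : ℕ) : ℝ) < ((4 * (m + 1) : ℕ) : ℝ) := by exact_mod_cast this
    push_cast at this ⊢
    linarith
  have hlatency : ∀ s a, ∑ i, s i < w → Conforms a w s → ∀ i r,
      injCum a i (r + 1) ≤ (A.exec false a).heardCum i (r + (m + 1)) :=
    fun s a hs ha i r => not_lt.1 fun hlt =>
      hno s a hs ha _ (A.exec_valid false a) (m + 1) hD ⟨i, r, hlt⟩
  set z : Fin n := ⟨0, by omega⟩
  set s : Fin n → ℕ := Pi.single z (w - 2)
  have hs : ∑ i, s i = w - 2 := by simp [s]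
  have hclaims : ∀ k < m + 1, ∀ v ≠ z, ∃ d ∈ Ico (k * (m + 1)) (k * (m + 1) + (m + 1)),
      A.Claims false (periodicBurst w s) v d := fun k _ v hv =>
    Claims.exists_of_heardCum_addPacket
      (fun u _ => by simp [periodicBurst, s, ite_apply, Pi.single_eq_of_ne hv])
      ((one_le_injCum_addPacket _ v _).trans (hlatency _ _
        (by simp only [Pi.add_apply, sum_add_distrib, hs, sum_pi_single', mem_univ, if_true]; omega)
        ((conforms_periodicBurst s).addPacket v _) v _))
  have hcount := mul_add_heardCum_le_of_claims hCF z (m + 1) (m + 1) hclaims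
  have hheard := hlatency s _ (by rw [hs]; omega) (conforms_periodicBurst s) z (m * (m + 1))
  have hburst := mul_le_mul_injCum_periodicBurst (by omega : 0 < w) s z (m * (m + 1) + 1)
  rw [show s z = w - 2 by simp [s]] at hburst
  rw [← Nat.succ_mul] at hheard
  exact (mul_lt_four_mul_of_round_budget hn hw hcount
    (hburst.trans (Nat.mul_le_mul_left w hheard))).not_ge (Nat.mul_div_le (n * w) 4)
end

section
/- Let n ≥ 1, let w be a positive integer, and let s : Fin n → ℕ satisfy ∑ᵢ s i ≤ w. For each node i, let a i : ℕ → ℕ give the number of packets injected into node i in each round, and suppose the window constraint holds: for every node i and every round t, ∑_{j=t}^{t+w-1} (a i) j ≤ s i. Let C : ℕ → Fin n → ℕ be a sequence of estimate arrays with C 0 i = 0 for all i, which is pointwise nondecreasing in the round number, and such that for every round t and node i, letting γ(t) = ∑ⱼ C t j, the updated estimate satisfies C (t+1) i ≤ max(C t i, M), where M is the maximum over all intervals of γ(t) consecutive rounds contained in [0, t] of the number of packets injected into node i during that interval. Then C t i ≤ s i for every round t and every node i. -/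
/-- If each entry `C t i` of the share-estimate arrays is
initialized to `0`, is nondecreasing in `t`, and is increased at most to the
maximum number of packets injected into node `i` during some interval of
`γ(t) = ∑ⱼ C t j` consecutive rounds contained in `[0, t]`, then under the
window constraint of a window adversary of window size `w` with shares `s`
(where `∑ᵢ s i ≤ w`), the estimates never overestimate: `C t i ≤ s i`. -/
theorem stmt8 (n w : ℕ) (hn : 1 ≤ n) (hw : 0 < w) (s : Fin n → ℕ)
    (hs : ∑ i, s i ≤ w) (a : Fin n → ℕ → ℕ)
    (ha : ∀ (i : Fin n) (t : ℕ), ∑ j ∈ Finset.Ico t (t + w), a i j ≤ s i)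
    (C : ℕ → Fin n → ℕ) (hC0 : ∀ i, C 0 i = 0)
    (hmono : ∀ t i, C t i ≤ C (t + 1) i)
    (hupd : ∀ t i, C (t + 1) i ≤ max (C t i)
      ((Finset.range (t + 2 - ∑ k, C t k)).sup
        fun u => ∑ j ∈ Finset.Ico u (u + ∑ k, C t k), a i j)) :
    ∀ t i, C t i ≤ s i := by
  intro t
  induction t with
  | zero => intro i; simp [hC0]
  | succ t ih =>
    intro i
    refine le_trans (hupd t i) (max_le (ih i) ?_)
    refine Finset.sup_le fun u _ => ?_
    have hγ : (∑ k, C t k) ≤ w := le_trans (Finset.sum_le_sum fun k _ => ih k) hs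
    calc ∑ j ∈ Finset.Ico u (u + ∑ k, C t k), a i j
        ≤ ∑ j ∈ Finset.Ico u (u + w), a i j :=
          Finset.sum_le_sum_of_subset (Finset.Ico_subset_Ico le_rfl (by omega))
      _ ≤ s i := ha i u
end
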